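/- arXiv:1009.2929 — 3 statements merged into one kernel-verified Lean document; each statement's English description precedes it below -/
import Mathlib

section
/- For every integer m ≥ 1, Σ_{j=1}^{m} s(m,j) B_{j-1}(x) = (-1)^{m-1} D_{m-1}(1-x) as polynomials in x. -/
open Polynomial Finset

/-- Stirling numbers of the second kind. -/
def stirling2 : ℕ → ℕ → ℕ
  | 0, 0 => 1
  | 0, _ + 1 => 0
  | _ + 1, 0 => 0
  | n + 1, k + 1 => (k + 1) * stirling2 n (k + 1) + stirling2 n k

/-- Signed Stirling numbers of the first kind. -/
def stirling1 : ℕ → ℕ → ℤ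
  | 0, 0 => 1
  | 0, _ + 1 => 0
  | n + 1, 0 => -(n : ℤ) * stirling1 n 0
  | n + 1, k + 1 => stirling1 n k - (n : ℤ) * stirling1 n (k + 1)

/-- The Bell polynomial `B_m(x) = ∑_{j=0}^m S(m,j) x^j` over `ℤ`. -/
noncomputable def bellPoly (m : ℕ) : Polynomial ℤ :=
  ∑ j ∈ range (m + 1), (stirling2 m j : ℤ) • X ^ j

/-- The derangement polynomial `D_m(x) = ∑_{j=0}^m C(m,j) j! (x-1)^{m-j}` over `ℤ`. -/
noncomputable def derPoly (m : ℕ) : Polynomial ℤ :=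
  ∑ j ∈ range (m + 1), ((m.choose j * j.factorial : ℕ) : ℤ) • (X - 1) ^ (m - j)

/-- The Bell numbers `B_m = ∑_j S(m,j)`. -/
def bell (m : ℕ) : ℕ := ∑ j ∈ range (m + 1), stirling2 m j

/-!
Stirling inversion gives `∑ⱼ s(m,j) B_j(x) = x^m`; it follows by induction from
`B_{n+1} = x (B_n + B_n')` and the recurrence `s(m+1,j+1) = s(m,j) - m s(m,j+1)`.
The same recurrence then shows that `T_m = ∑ⱼ s(m,j) B_{j-1}(x)` satisfies
`T_{m+1} = x^m - m T_m`. Since `D_{m+1} = (m+1) D_m + (x-1)^{m+1}`, the right-hand side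
`(-1)^{m-1} D_{m-1}(1-x)` satisfies the same recurrence, and both sides equal `1` at `m = 1`.
-/

lemma stirling2_eq_zero_of_lt : ∀ {n k : ℕ}, n < k → stirling2 n k = 0
  | 0, _ + 1, _ => rfl
  | n + 1, k + 1, h => by
    simp [stirling2, stirling2_eq_zero_of_lt (by omega : n < k + 1),
      stirling2_eq_zero_of_lt (by omega : n < k)]

lemma stirling1_eq_zero_of_lt : ∀ {n k : ℕ}, n < k → stirling1 n k = 0
  | 0, _ + 1, _ => rfl
  | n + 1, k + 1, h => by
    simp [stirling1, stirling1_eq_zero_of_lt (by omega : n < k + 1),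
      stirling1_eq_zero_of_lt (by omega : n < k)]

lemma stirling1_succ_zero : ∀ n : ℕ, stirling1 (n + 1) 0 = 0
  | 0 => rfl
  | n + 1 => by rw [stirling1, stirling1_succ_zero n, mul_zero]

lemma sum_stirling1_succ_smul {M : Type*} [AddCommGroup M] (m : ℕ) (f : ℕ → M) :
    ∑ j ∈ range (m + 2), stirling1 (m + 1) j • f j =
      ∑ j ∈ range (m + 1), stirling1 m j • f (j + 1) -
        (m : ℤ) • ∑ j ∈ range (m + 1), stirling1 m j • f j := by
  have hshift := sum_range_succ' (fun j => stirling1 m j • f j) (m + 1)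
  rw [sum_range_succ, stirling1_eq_zero_of_lt (Nat.lt_succ_self m), zero_smul, add_zero] at hshift
  simp only [sum_range_succ' _ (m + 1), stirling1, sub_smul, sum_sub_distrib, hshift, smul_add,
    smul_sum, smul_smul, neg_mul, neg_smul]
  abel

lemma coeff_bellPoly (n k : ℕ) : (bellPoly n).coeff k = stirling2 n k := by
  simp only [bellPoly, finsetSum_coeff, coeff_smul, coeff_X_pow, smul_eq_mul, mul_ite, mul_one,
    mul_zero, sum_ite_eq, mem_range]
  split_ifs with h
  · rfl
  · rw [stirling2_eq_zero_of_lt (by omega), Nat.cast_zero]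

lemma bellPoly_zero : bellPoly 0 = 1 := by
  simp [bellPoly, stirling2]

lemma bellPoly_succ (n : ℕ) : bellPoly (n + 1) = X * (bellPoly n + derivative (bellPoly n)) := by
  ext (_ | k)
  · simp [coeff_bellPoly, stirling2]
  · rw [coeff_X_mul, coeff_add, coeff_derivative, coeff_bellPoly, coeff_bellPoly, coeff_bellPoly,
      stirling2]
    push_cast
    ring

lemma sum_stirling1_smul_bellPoly (m : ℕ) :
    ∑ j ∈ range (m + 1), stirling1 m j • bellPoly j = X ^ m := by
  induction m with
  | zero => simp [stirling1, bellPoly_zero]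
  | succ m ih =>
    have hsucc : ∑ j ∈ range (m + 1), stirling1 m j • bellPoly (j + 1) =
        X * (X ^ m + derivative (X ^ m)) := by
      simp only [bellPoly_succ, ← ih, derivative_sum, derivative_smul, mul_smul_comm, smul_add,
        sum_add_distrib, mul_add, mul_sum]
    rw [sum_stirling1_succ_smul, hsucc, ih, derivative_X_pow]
    rcases m with _ | m
    · simp
    · simp only [smul_eq_C_mul, map_natCast, Nat.add_sub_cancel]
      ring

lemma derPoly_succ (m : ℕ) :
    derPoly (m + 1) = (m + 1 : ℤ) • derPoly m + (X - 1) ^ (m + 1) := by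
  rw [derPoly, sum_range_succ', derPoly, smul_sum]
  simp only [Nat.choose_zero_right, Nat.factorial_zero, mul_one, Nat.cast_one, one_smul,
    Nat.sub_zero]
  congr 1
  refine sum_congr rfl fun j _ => ?_
  have hcoeff :
      (m + 1).choose (j + 1) * (j + 1).factorial = (m + 1) * (m.choose j * j.factorial) := by
    rw [Nat.factorial_succ, ← mul_assoc, ← mul_assoc, Nat.add_one_mul_choose_eq]
  rw [Nat.add_sub_add_right, hcoeff, smul_smul]
  push_cast
  rfl

lemma neg_one_pow_mul_derPoly_succ_comp_one_sub (m : ℕ) :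
    (-1) ^ (m + 1) * (derPoly (m + 1)).comp (1 - X) =
      X ^ (m + 1) - (m + 1 : ℤ) • ((-1) ^ m * (derPoly m).comp (1 - X)) := by
  rw [derPoly_succ, add_comp, smul_comp, pow_comp, sub_comp, X_comp, one_comp,
    sub_sub_cancel_left, neg_pow (X : ℤ[X])]
  have hsq : ((-1 : ℤ[X]) ^ (m + 1)) * (-1) ^ (m + 1) = 1 := by
    rw [← mul_pow]; simp
  simp only [smul_eq_C_mul]
  linear_combination X ^ (m + 1) * hsq

/-- The added `j = 0` term, where `j - 1` truncates to `0`, has coefficient `s(m + 1, 0) = 0`. -/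
lemma sum_Icc_stirling1_smul_bellPoly_pred (m : ℕ) :
    ∑ j ∈ Icc 1 (m + 1), stirling1 (m + 1) j • bellPoly (j - 1) =
      ∑ j ∈ range (m + 2), stirling1 (m + 1) j • bellPoly (j - 1) := by
  rw [range_eq_Ico, sum_eq_sum_Ico_succ_bot (by omega), stirling1_succ_zero, zero_smul, zero_add,
    ← Ico_add_one_right_eq_Icc]
  rfl

lemma sum_stirling1_succ_smul_bellPoly_pred (m : ℕ) :
    ∑ j ∈ range (m + 2), stirling1 (m + 1) j • bellPoly (j - 1) =
      X ^ m - (m : ℤ) • ∑ j ∈ range (m + 1), stirling1 m j • bellPoly (j - 1) := by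
  rw [sum_stirling1_succ_smul]
  simp only [Nat.add_sub_cancel, sum_stirling1_smul_bellPoly]

lemma sum_stirling1_smul_bellPoly_pred_eq_derPoly (k : ℕ) :
    ∑ j ∈ range (k + 2), stirling1 (k + 1) j • bellPoly (j - 1) =
      (-1) ^ k * (derPoly k).comp (1 - X) := by
  induction k with
  | zero => simp [sum_range_succ, stirling1, bellPoly_zero, derPoly]
  | succ k ih =>
    rw [sum_stirling1_succ_smul_bellPoly_pred, ih, neg_one_pow_mul_derPoly_succ_comp_one_sub]
    push_cast
    rfl

theorem stirling1_bellPoly_derPoly (m : ℕ) (hm : 1 ≤ m) :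
    ∑ j ∈ Icc 1 m, C (stirling1 m j) * bellPoly (j - 1) =
      (-1) ^ (m - 1) * (derPoly (m - 1)).comp (1 - X) := by
  obtain ⟨k, rfl⟩ := Nat.exists_eq_add_of_le' hm
  simp only [← smul_eq_C_mul, sum_Icc_stirling1_smul_bellPoly_pred, Nat.add_sub_cancel]
  exact sum_stirling1_smul_bellPoly_pred_eq_derPoly k
end

section
/- For every prime p, the polynomial congruence B_{p-1}(x) ≡ 1 + D_{p-1}(1-x) (mod p) holds, i.e., each coefficient of B_{p-1}(x) − 1 − D_{p-1}(1-x) is divisible by p. -/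
open Polynomial Finset

/-!
The coefficient of `x^i` in `D_{p-1}(1-x)` is `(-1)^i (p-1)!/i!`, and
`i! S(p-1,i) = (-1)^i ∑_j (-1)^j C(i,j) j^(p-1)`. Modulo `p`, Fermat's little theorem turns every
`j^(p-1)` with `j ≠ 0` into `1`, leaving the alternating binomial sum without its `j = 0` term, so
`i! S(p-1,i) ≡ [i = 0] - (-1)^i`; Wilson's theorem gives `i! (-1)^i (p-1)!/i! ≡ -(-1)^i`.
Cancelling the unit `i!` (for `i < p`) gives the congruence coefficientwise.
-/

open Nat

theorem stirling2_eq_stirlingSecond : ∀ n k, stirling2 n k = stirlingSecond n k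
  | 0, 0 | 0, _ + 1 | _ + 1, 0 => rfl
  | n + 1, k + 1 => by
    rw [stirling2, stirlingSecond_succ_succ, stirling2_eq_stirlingSecond n (k + 1),
      stirling2_eq_stirlingSecond n k]

theorem Int.natCast_mul_choose_succ (k i : ℕ) :
    (i : ℤ) * (k + 1).choose i = (k + 1) * ((k + 1).choose i - k.choose i) := by
  cases i with
  | zero => simp
  | succ i =>
    have h : ((k + 1) * k.choose i : ℤ) = (k.choose i + k.choose (i + 1)) * (i + 1) := by
      exact_mod_cast (Nat.add_one_mul_choose_eq k i).trans (by rw [Nat.choose_succ_succ'])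
    rw [Nat.choose_succ_succ']
    push_cast
    linear_combination -h

theorem Nat.factorial_mul_stirlingSecond (n k : ℕ) :
    (k ! : ℤ) * stirlingSecond n k =
      (-1) ^ k * ∑ i ∈ range (k + 1), (-1) ^ i * k.choose i * (i : ℤ) ^ n := by
  induction n generalizing k with
  | zero =>
    cases k with
    | zero => simp
    | succ k => simp [Int.alternating_sum_range_choose]
  | succ n ih =>
    cases k with
    | zero => simp
    | succ k =>
      have hext : ∑ i ∈ range (k + 2), (-1 : ℤ) ^ i * k.choose i * (i : ℤ) ^ n =
          ∑ i ∈ range (k + 1), (-1 : ℤ) ^ i * k.choose i * (i : ℤ) ^ n := by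
        simp [sum_range_succ _ (k + 1)]
      have hsum : ∑ i ∈ range (k + 2), (-1 : ℤ) ^ i * (k + 1).choose i * (i : ℤ) ^ (n + 1) =
          (k + 1) * ∑ i ∈ range (k + 2), (-1 : ℤ) ^ i * (k + 1).choose i * (i : ℤ) ^ n -
            (k + 1) * ∑ i ∈ range (k + 2), (-1 : ℤ) ^ i * k.choose i * (i : ℤ) ^ n := by
        rw [mul_sum, mul_sum, ← sum_sub_distrib]
        refine sum_congr rfl fun i _ => ?_
        linear_combination (-1 : ℤ) ^ i * (i : ℤ) ^ n * Int.natCast_mul_choose_succ k i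
      have hfac : ((k + 1)! : ℤ) = (k + 1) * k ! := by push_cast [factorial_succ]; ring
      rw [stirlingSecond_succ_succ, hsum, hext]
      push_cast
      linear_combination (k + 1 : ℤ) * ih (k + 1) + (k + 1 : ℤ) * ih k +
        (stirlingSecond n k : ℤ) * hfac

theorem ZMod.sum_range_mul_pow_card_sub_one {p : ℕ} [Fact p.Prime] {i : ℕ} (hi : i < p)
    (f : ℕ → ZMod p) :
    ∑ j ∈ range (i + 1), f j * (j : ZMod p) ^ (p - 1) = ∑ j ∈ range (i + 1), f j - f 0 := by
  have hp : p - 1 ≠ 0 := by have := (Fact.out : p.Prime).two_le; omega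
  rw [sum_range_succ', sum_range_succ' f, Nat.cast_zero, zero_pow hp, mul_zero, add_zero,
    add_sub_cancel_right]
  refine sum_congr rfl fun j hj => ?_
  have hj : (j + 1 : ZMod p) ≠ 0 := by
    rw [← Nat.cast_succ, Ne, ZMod.natCast_eq_zero_iff]
    exact Nat.not_dvd_of_pos_of_lt j.succ_pos (by rw [mem_range] at hj; omega)
  rw [Nat.cast_succ, ZMod.pow_card_sub_one_eq_one hj, mul_one]

theorem ZMod.factorial_mul_stirlingSecond_pred {p : ℕ} [Fact p.Prime] {i : ℕ} (hi : i < p) :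
    (i ! : ZMod p) * stirlingSecond (p - 1) i = (if i = 0 then 1 else 0) - (-1) ^ i := by
  have h := congrArg (Int.cast : ℤ → ZMod p) (factorial_mul_stirlingSecond (p - 1) i)
  have halt := congrArg (Int.cast : ℤ → ZMod p) (Int.alternating_sum_range_choose (n := i))
  push_cast at h halt
  rw [h, sum_range_mul_pow_card_sub_one hi, halt]
  split_ifs with h0 <;> simp [h0]

theorem ZMod.stirlingSecond_pred_sub_ite {p : ℕ} [Fact p.Prime] {i : ℕ} (hi : i < p) :
    (stirlingSecond (p - 1) i : ZMod p) - (if i = 0 then 1 else 0) =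
      (-1) ^ i * (((p - 1).choose i : ZMod p) * (p - 1 - i)!) := by
  have hfac : (i ! : ZMod p) ≠ 0 := by
    rw [Ne, ZMod.natCast_eq_zero_iff, (Fact.out : p.Prime).dvd_factorial]
    omega
  have hwilson : (i ! : ZMod p) * ((p - 1).choose i * (p - 1 - i)!) = -1 := by
    rw [mul_left_comm, ← mul_assoc]
    exact_mod_cast (congrArg Nat.cast (Nat.choose_mul_factorial_mul_factorial (by omega))).trans
      (ZMod.wilsons_lemma (p := p))
  apply mul_left_cancel₀ hfac
  rw [mul_sub, factorial_mul_stirlingSecond_pred hi, mul_left_comm, hwilson]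
  split_ifs with h0
  · simp [h0]
  · ring

theorem coeff_bellPoly_s9 (m i : ℕ) : (bellPoly m).coeff i = stirlingSecond m i := by
  simp only [bellPoly, finsetSum_coeff, coeff_smul, coeff_X_pow, smul_eq_mul, mul_ite, mul_one,
    mul_zero, sum_ite_eq, mem_range]
  split_ifs with h
  · rw [stirling2_eq_stirlingSecond]
  · rw [stirlingSecond_eq_zero_of_lt (by omega), Nat.cast_zero]

theorem derPoly_comp_one_sub (m : ℕ) :
    (derPoly m).comp (1 - X) =
      ∑ i ∈ range (m + 1), C ((-1 : ℤ) ^ i * (m.choose i * (m - i)! : ℕ)) * X ^ i := by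
  rw [derPoly, Polynomial.sum_comp, ← sum_range_reflect]
  refine sum_congr rfl fun i hi => ?_
  rw [mem_range] at hi
  rw [smul_comp, pow_comp, sub_comp, X_comp, one_comp, sub_sub_cancel_left,
    show m - (m + 1 - 1 - i) = i by omega, show m + 1 - 1 - i = m - i by omega,
    Nat.choose_symm (by omega), neg_pow, zsmul_eq_mul, C_mul, C_pow, C_neg, C_1, map_natCast,
    Int.cast_natCast]
  ring

theorem coeff_derPoly_comp_one_sub (m i : ℕ) :
    ((derPoly m).comp (1 - X)).coeff i = (-1) ^ i * (m.choose i * (m - i)! : ℕ) := by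
  simp only [derPoly_comp_one_sub, finsetSum_coeff, coeff_C_mul_X_pow, sum_ite_eq, mem_range]
  split_ifs with h
  · rfl
  · rw [Nat.choose_eq_zero_of_lt (by omega), zero_mul, Nat.cast_zero, mul_zero]

theorem bellPoly_pred_prime (p : ℕ) (hp : p.Prime) :
    ∀ i, (p : ℤ) ∣ (bellPoly (p - 1) - 1 - (derPoly (p - 1)).comp (1 - X)).coeff i := by
  have := Fact.mk hp
  intro i
  rw [← ZMod.intCast_zmod_eq_zero_iff_dvd, coeff_sub, coeff_sub, coeff_bellPoly_s9,
    coeff_derPoly_comp_one_sub, coeff_one]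
  rcases lt_or_ge i p with hi | hi
  · push_cast
    rw [ZMod.stirlingSecond_pred_sub_ite hi, sub_self]
  · have hp2 := hp.two_le
    rw [stirlingSecond_eq_zero_of_lt (by omega), Nat.choose_eq_zero_of_lt (by omega),
      if_neg (by omega)]
    simp
end

section
/- For every prime p, B_{p-1} ≡ 1 + D_{p-1} (mod p), where B_{p-1} is the (p-1)-st Bell number and D_{p-1} is the (p-1)-st derangement number. -/
open Polynomial Finset

/-! Write `q = p - 1`. Taking `k`-th forward differences at `0` of
`x ^ n = ∑ j, S(n, j) * x (x - 1) ⋯ (x - j + 1)` gives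
`k! S(n, k) = ∑ j, (-1)^(k-j) C(k, j) j ^ n`; for `n = q` and `0 < k < p`, Fermat's little
theorem collapses the sum to `-(-1)^k`. Wilson's theorem turns `D_q = ∑ k, (-1)^k q! / k!`
into `-∑ k, (-1)^k / k!`, so both `B_q` and `1 + D_q` are `1 - ∑_{k < p} (-1)^k / k!`
modulo `p`. -/

open Nat fwdDiff

theorem stirling2_eq_stirlingSecond_s10 : stirling2 = Nat.stirlingSecond := by
  ext n k
  induction n generalizing k with
  | zero => cases k <;> rfl
  | succ n ih => cases k <;> simp [stirling2, Nat.stirlingSecond_succ_succ, ih]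

namespace Nat

theorem mul_descFactorial (x k : ℕ) :
    x * x.descFactorial k = x.descFactorial (k + 1) + k * x.descFactorial k := by
  rcases le_or_gt k x with hk | hk
  · rw [descFactorial_succ, ← add_mul, Nat.sub_add_cancel hk]
  · simp [descFactorial_eq_zero_iff_lt.mpr hk]

theorem pow_eq_sum_stirlingSecond_mul_descFactorial (n x : ℕ) :
    x ^ n = ∑ k ∈ range (n + 1), stirlingSecond n k * x.descFactorial k := by
  induction n with
  | zero => simp
  | succ n ih =>
    have hshift : ∑ k ∈ range (n + 1), stirlingSecond n k * (k * x.descFactorial k) =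
        ∑ k ∈ range (n + 1), (k + 1) * stirlingSecond n (k + 1) * x.descFactorial (k + 1) := by
      rw [sum_range_succ', sum_range_succ, stirlingSecond_eq_zero_of_lt (lt_add_one n)]
      simp only [zero_mul, mul_zero, add_zero]
      exact sum_congr rfl fun k _ ↦ by ring
    calc x ^ (n + 1)
        = ∑ k ∈ range (n + 1), stirlingSecond n k * (x * x.descFactorial k) := by
          rw [pow_succ', ih, mul_sum]; exact sum_congr rfl fun k _ ↦ by ring
      _ = ∑ k ∈ range (n + 1), stirlingSecond (n + 1) (k + 1) * x.descFactorial (k + 1) := by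
          simp_rw [mul_descFactorial, mul_add, sum_add_distrib, hshift, ← sum_add_distrib,
            stirlingSecond_succ_succ]
          exact sum_congr rfl fun k _ ↦ by ring
      _ = ∑ k ∈ range (n + 2), stirlingSecond (n + 1) k * x.descFactorial k := by
          rw [sum_range_succ' _ (n + 1), stirlingSecond_succ_zero, zero_mul, add_zero]

theorem factorial_mul_stirlingSecond_s10 (n k : ℕ) :
    (k ! * stirlingSecond n k : ℤ) =
      ∑ j ∈ range (k + 1), (-1) ^ (k - j) * k.choose j * (j : ℤ) ^ n := by
  have hpow : (fun x : ℕ ↦ (x : ℤ) ^ n) =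
      ∑ j ∈ range (n + 1),
        (j ! * stirlingSecond n j : ℤ) • fun x : ℕ ↦ (x.choose j : ℤ) := by
    ext x
    simp only [Finset.sum_apply, Pi.smul_apply, smul_eq_mul]
    exact_mod_cast (pow_eq_sum_stirlingSecond_mul_descFactorial n x).trans
      (sum_congr rfl fun j _ ↦ by rw [descFactorial_eq_factorial_mul_choose]; ring)
  have := congr_fun (congr_arg (fwdDiff 1)^[k] hpow) 0
  rw [fwdDiff_iter_eq_sum_shift, fwdDiff_iter_finsetSum] at this
  simp only [Finset.sum_apply, fwdDiff_iter_const_smul, Pi.smul_apply, fwdDiff_iter_choose_zero,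
    smul_eq_mul, mul_ite, mul_one, mul_zero, sum_ite_eq, mem_range, zero_add] at this
  rw [this]
  split_ifs with hk
  · rfl
  · rw [stirlingSecond_eq_zero_of_lt (by omega), cast_zero, mul_zero]

end Nat

namespace ZMod

variable {p : ℕ} [Fact p.Prime]

theorem factorial_ne_zero {k : ℕ} (hk : k < p) : (k ! : ZMod p) ≠ 0 := by
  rw [Ne, natCast_eq_zero_iff, (Fact.out : p.Prime).dvd_factorial]
  omega

theorem stirlingSecond_pred_eq {k : ℕ} (hk0 : 0 < k) (hk : k < p) :
    (stirlingSecond (p - 1) k : ZMod p) = -((-1) ^ k * (k ! : ZMod p)⁻¹) := by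
  have hbinom : ∑ j ∈ range (k + 1), (-1 : ZMod p) ^ (k - j) * k.choose j = 0 := by
    simpa [hk0.ne'] using (add_pow (1 : ZMod p) (-1) k).symm
  have hfermat :
      ∑ j ∈ range (k + 1), (-1 : ZMod p) ^ (k - j) * k.choose j * (j : ZMod p) ^ (p - 1) =
        -(-1) ^ k := by
    calc _ = ∑ j ∈ range (k + 1),
            (-1 : ZMod p) ^ (k - j) * k.choose j * ((j : ZMod p) ^ (p - 1) - 1) := by
          simp only [mul_sub, mul_one, sum_sub_distrib, hbinom, sub_zero]
      _ = (-1 : ZMod p) ^ (k - 0) * k.choose 0 * (((0 : ℕ) : ZMod p) ^ (p - 1) - 1) := by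
          refine sum_eq_single 0 (fun j hj hj0 ↦ ?_) (by simp)
          have hj_ne : (j : ZMod p) ≠ 0 := by
            rw [Ne, natCast_eq_zero_iff]
            exact fun hdvd ↦ hj0 (Nat.eq_zero_of_dvd_of_lt hdvd (by rw [mem_range] at hj; omega))
          rw [pow_card_sub_one_eq_one hj_ne, sub_self, mul_zero]
      _ = -(-1) ^ k := by
          simp [zero_pow (Nat.sub_ne_zero_of_lt (Fact.out : p.Prime).one_lt)]
  have h := congr_arg (Int.cast : ℤ → ZMod p) (factorial_mul_stirlingSecond_s10 (p - 1) k)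
  push_cast at h
  rw [hfermat] at h
  calc _ = (k ! : ZMod p)⁻¹ * (k ! * stirlingSecond (p - 1) k) :=
        (inv_mul_cancel_left₀ (factorial_ne_zero hk) _).symm
    _ = _ := by rw [h]; ring

theorem numDerangements_pred_eq :
    (numDerangements (p - 1) : ZMod p) = -∑ k ∈ range p, (-1) ^ k * (k ! : ZMod p)⁻¹ := by
  have hasc : ∀ k < p, ((k + 1).ascFactorial (p - 1 - k) : ZMod p) = -(k ! : ZMod p)⁻¹ := by
    intro k hk
    have hwilson : (k ! : ZMod p) * (k + 1).ascFactorial (p - 1 - k) = -1 := by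
      rw [← Nat.cast_mul, factorial_mul_ascFactorial, Nat.add_sub_cancel' (by omega),
        wilsons_lemma]
    calc _ = (k ! : ZMod p)⁻¹ * (k ! * (k + 1).ascFactorial (p - 1 - k)) :=
          (inv_mul_cancel_left₀ (factorial_ne_zero hk) _).symm
      _ = _ := by rw [hwilson]; ring
  rw [← Int.cast_natCast, numDerangements_sum, Nat.sub_add_cancel (Fact.out : p.Prime).one_le]
  push_cast
  rw [← sum_neg_distrib]
  exact sum_congr rfl fun k hk ↦ by rw [hasc k (mem_range.mp hk), mul_neg]

theorem bell_pred_eq :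
    (bell (p - 1) : ZMod p) = 1 - ∑ k ∈ range p, (-1) ^ k * (k ! : ZMod p)⁻¹ := by
  rw [bell, stirling2_eq_stirlingSecond_s10, Nat.sub_add_cancel (Fact.out : p.Prime).one_le,
    Nat.cast_sum]
  obtain ⟨q, rfl⟩ : ∃ q, p = q + 2 :=
    ⟨p - 2, by have := (Fact.out : p.Prime).two_le; omega⟩
  rw [sum_range_succ', sum_range_succ' _ (q + 1),
    sum_congr rfl fun k hk ↦ stirlingSecond_pred_eq k.succ_pos (by rw [mem_range] at hk; omega)]
  simp

end ZMod

theorem bell_pred_congr (p : ℕ) (hp : p.Prime) :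
    (bell (p - 1) : ℤ) ≡ 1 + (numDerangements (p - 1) : ℤ) [ZMOD p] := by
  have := Fact.mk hp
  rw [← ZMod.intCast_eq_intCast_iff]
  push_cast
  rw [ZMod.bell_pred_eq, ZMod.numDerangements_pred_eq]
  ring
end
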